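/- arXiv:1410.6974 — 6 statements merged into one kernel-verified Lean document; each statement's English description precedes it below -/
import Mathlib

section
/- With Ω symmetric with zero diagonal, h(v) = (1/2)vᵀΩv, and Q_i = I + D_iΩ, for every v one has h(Q_i v) ≥ h(v), with equality if and only if Q_i v = v. -/
/-!
`Q_i v` only changes the `i`-th coordinate of `v`, by `c = (Ω v)_i`. Expanding the quadratic form
and using symmetry, `h (v + c eᵢ) = h v + c (Ω v)_i + c² Ω_ii / 2 = h v + c²`, since `Ω_ii = 0`.
Hence `h` can only grow, and it stays the same exactly when `c = 0`, i.e. when `Q_i v = v`.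
-/

open Matrix

section

variable {ι R : Type*} [Fintype ι] [DecidableEq ι]

theorem one_add_single_mul_mulVec [Semiring R] (A : Matrix ι ι R) (i : ι) (v : ι → R) :
    (1 + single i i 1 * A) *ᵥ v = v + Pi.single i ((A *ᵥ v) i) := by
  rw [add_mulVec, one_mulVec, ← mulVec_mulVec, single_mulVec, one_mul]
  rfl

theorem dotProduct_mulVec_add_single [CommSemiring R] {A : Matrix ι ι R} (hA : Aᵀ = A)
    (v : ι → R) (i : ι) (c : R) :
    (v + Pi.single i c) ⬝ᵥ A *ᵥ (v + Pi.single i c) =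
      v ⬝ᵥ A *ᵥ v + 2 * c * (A *ᵥ v) i + c ^ 2 * A i i := by
  have hsymm : v ⬝ᵥ A *ᵥ Pi.single i c = c * (A *ᵥ v) i := by
    rw [dotProduct_mulVec, ← mulVec_transpose, hA, dotProduct_single, mul_comm]
  have hcol : (A *ᵥ Pi.single i c) i = A i i * c := by simp
  rw [mulVec_add, dotProduct_add, add_dotProduct, add_dotProduct, hsymm, single_dotProduct,
    single_dotProduct, hcol]
  ring

end

theorem stmt3 {n : ℕ} (Ω : Matrix (Fin n) (Fin n) ℝ) (hsymm : Ωᵀ = Ω)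
    (hdiag : ∀ i, Ω i i = 0) (i : Fin n) (v : Fin n → ℝ) :
    let Q : Matrix (Fin n) (Fin n) ℝ := 1 + single i i 1 * Ω
    let h : (Fin n → ℝ) → ℝ := fun w => (1/2) * (w ⬝ᵥ (Ω *ᵥ w))
    h (Q *ᵥ v) ≥ h v ∧ (h (Q *ᵥ v) = h v ↔ Q *ᵥ v = v) := by
  intro Q h
  set c := (Ω *ᵥ v) i
  have hQv : Q *ᵥ v = v + Pi.single i c := one_add_single_mul_mulVec Ω i v
  have hgain : h (Q *ᵥ v) = h v + c ^ 2 := by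
    simp only [h, hQv, dotProduct_mulVec_add_single hsymm, hdiag]
    ring
  have hfixed : Q *ᵥ v = v ↔ c = 0 := by
    rw [hQv, add_eq_left, Pi.single_eq_zero_iff]
  rw [hgain, hfixed]
  constructor
  · linarith [sq_nonneg c]
  · rw [add_eq_left, sq_eq_zero_iff]
end

section
/- Let Ω be a symmetric real n×n matrix with zero diagonal and let Γ(Ω) be the multiplicative monoid generated by the matrices Q_i = I + D_iΩ, i = 1,…,n. Then for every M ∈ Γ(Ω) and every vector v ∈ ℝⁿ, h(Mv) ≥ h(v), where h(v) = (1/2)vᵀΩv, and h(Mv) = h(v) implies Mv = v. -/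
/-!
With `q w = wᵀΩw`, symmetry and the zero diagonal give `q (Q_i v) = q v + 2 ((Ωv)_i)²`, while
`Q_i v = v + (Ωv)_i e_i`; so each generator raises `q` and fixes `v` whenever it preserves `q v`.
Matrices with this property form a submonoid: if `q (M N v) = q v` then both steps preserve `q`,
so `N v = v` and then `M v = v`.
-/

open Matrix

namespace Matrix

variable {ι R : Type*} [Fintype ι]

theorem IsSymm.dotProduct_mulVec_comm [CommSemiring R] {Ω : Matrix ι ι R} (hΩ : Ω.IsSymm)
    (v w : ι → R) : v ⬝ᵥ Ω *ᵥ w = w ⬝ᵥ Ω *ᵥ v := by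
  rw [dotProduct_mulVec, ← mulVec_transpose, hΩ.eq, dotProduct_comm]

variable [DecidableEq ι]

def raisingSubmonoid {α : Type*} [PartialOrder α] [Semiring R] (q : (ι → R) → α) :
    Submonoid (Matrix ι ι R) where
  carrier := {M | ∀ w, q w ≤ q (M *ᵥ w) ∧ (q (M *ᵥ w) = q w → M *ᵥ w = w)}
  one_mem' w := by simp
  mul_mem' {M N} hM hN w := by
    obtain ⟨hNw, hNw_eq⟩ := hN w
    have hMNw := (hM (N *ᵥ w)).1
    rw [← mulVec_mulVec]
    refine ⟨hNw.trans hMNw, fun heq => ?_⟩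
    have hN_fix : N *ᵥ w = w := hNw_eq (le_antisymm (heq ▸ hMNw) hNw)
    rw [hN_fix] at heq ⊢
    exact (hM w).2 heq

theorem raisingSubmonoid_le_comp {α β : Type*} [PartialOrder α] [PartialOrder β] [Semiring R]
    {q : (ι → R) → α} {g : α → β} (hg : StrictMono g) :
    raisingSubmonoid q ≤ raisingSubmonoid (g ∘ q) := by
  intro M hM w
  obtain ⟨hle, hfix⟩ := hM w
  refine ⟨hg.monotone hle, fun heq => hfix ?_⟩
  rcases hle.eq_or_lt with h | h
  · exact h.symm
  · exact absurd heq (hg h).ne'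

theorem one_add_single_mul_mulVec [Semiring R] (Ω : Matrix ι ι R) (i : ι) (v : ι → R) :
    (1 + single i i 1 * Ω) *ᵥ v = v + Pi.single i ((Ω *ᵥ v) i) := by
  rw [add_mulVec, one_mulVec, ← mulVec_mulVec, single_mulVec, one_mul]
  rfl

theorem quadForm_one_add_single_mul_mulVec [CommRing R] {Ω : Matrix ι ι R} (hΩ : Ω.IsSymm)
    (hdiag : ∀ i, Ω i i = 0) (i : ι) (v : ι → R) :
    (1 + single i i 1 * Ω) *ᵥ v ⬝ᵥ Ω *ᵥ ((1 + single i i 1 * Ω) *ᵥ v) =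
      v ⬝ᵥ Ω *ᵥ v + 2 * (Ω *ᵥ v) i ^ 2 := by
  rw [one_add_single_mul_mulVec]
  set t := (Ω *ᵥ v) i
  have hcross : Pi.single i t ⬝ᵥ Ω *ᵥ v = t * t := single_dotProduct _ _ _
  have hsingle : Pi.single i t ⬝ᵥ Ω *ᵥ Pi.single i t = 0 := by
    simp [single_dotProduct, mulVec_single, hdiag]
  rw [mulVec_add, dotProduct_add, add_dotProduct, add_dotProduct,
    hΩ.dotProduct_mulVec_comm v (Pi.single i t), hcross, hsingle]
  ring

theorem one_add_single_mul_mem_raisingSubmonoid [CommRing R] [LinearOrder R]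
    [IsStrictOrderedRing R] {Ω : Matrix ι ι R} (hΩ : Ω.IsSymm) (hdiag : ∀ i, Ω i i = 0)
    (i : ι) : 1 + single i i 1 * Ω ∈ raisingSubmonoid fun w => w ⬝ᵥ Ω *ᵥ w := by
  intro v
  simp only [quadForm_one_add_single_mul_mulVec hΩ hdiag]
  refine ⟨le_add_of_nonneg_right (by positivity), fun heq => ?_⟩
  have ht : (Ω *ᵥ v) i = 0 := by simpa using heq
  rw [one_add_single_mul_mulVec, ht, Pi.single_zero, add_zero]

end Matrix

theorem stmt4 {n : ℕ} (Ω : Matrix (Fin n) (Fin n) ℝ) (hsymm : Ωᵀ = Ω)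
    (hdiag : ∀ i, Ω i i = 0)
    (M : Matrix (Fin n) (Fin n) ℝ)
    (hM : M ∈ Submonoid.closure
      (Set.range fun i : Fin n => (1 : Matrix (Fin n) (Fin n) ℝ) + single i i 1 * Ω))
    (v : Fin n → ℝ) :
    let h : (Fin n → ℝ) → ℝ := fun w => (1/2) * (w ⬝ᵥ (Ω *ᵥ w))
    h (M *ᵥ v) ≥ h v ∧ (h (M *ᵥ v) = h v → M *ᵥ v = v) := by
  intro h
  have hgen : Submonoid.closure (Set.range fun i : Fin n => 1 + single i i 1 * Ω) ≤
      raisingSubmonoid fun w => w ⬝ᵥ Ω *ᵥ w :=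
    Submonoid.closure_le.2 <| Set.range_subset_iff.2 <|
      one_add_single_mul_mem_raisingSubmonoid hsymm hdiag
  exact raisingSubmonoid_le_comp (strictMono_mul_left_of_pos (one_half_pos (α := ℝ)))
    (hgen hM) v
end

section
/- Let M ∈ M_n(ℝ) and suppose there is a continuous function h : ℝⁿ → ℝ such that for every vector v and every positive integer k, h(M^k v) ≥ h(Mv) ≥ h(v), and h(Mv) = h(v) implies Mv = v. Then M has no complex eigenvalue μ with |μ| = 1 and μ ≠ 1. -/
/-!
Powers of a point of the unit circle return arbitrarily close to `1`: there are `k_j ≥ 1` with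
`μ ^ k_j → 1`. If `M w = μ w`, then `M ^ k_j` applied to `Re w` and `Im w` converges back to them,
so for `v` either of these `h (M v) ≤ h (M ^ k_j v) → h v`. Together with `h v ≤ h (M v)` this
forces `h (M v) = h v`, hence `M v = v`, so `M w = w` and `μ = 1`.
-/

open Matrix Filter Topology

theorem exists_tendsto_pow_one {G : Type*} [Group G] [TopologicalSpace G] [IsTopologicalGroup G]
    [SeqCompactSpace G] (g : G) :
    ∃ k : ℕ → ℕ, (∀ j, 0 < k j) ∧ Tendsto (fun j => g ^ k j) atTop (𝓝 1) := by
  obtain ⟨a, φ, hφ, hlim⟩ := SeqCompactSpace.tendsto_subseq fun j => g ^ j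
  refine ⟨fun j => φ (j + 1) - φ j, fun j => Nat.sub_pos_of_lt (hφ j.lt_succ_self), ?_⟩
  have hquot := (hlim.comp (tendsto_add_atTop_nat 1)).mul hlim.inv
  rw [mul_inv_cancel] at hquot
  refine hquot.congr fun j => ?_
  simp [pow_sub g (hφ j.lt_succ_self).le]

theorem Complex.exists_tendsto_pow_one_of_norm_eq_one {μ : ℂ} (hμ : ‖μ‖ = 1) :
    ∃ k : ℕ → ℕ, (∀ j, 0 < k j) ∧ Tendsto (fun j => μ ^ k j) atTop (𝓝 1) := by
  let z : Circle := ⟨μ, mem_sphere_zero_iff_norm.2 hμ⟩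
  obtain ⟨k, hk, hlim⟩ := _root_.exists_tendsto_pow_one z
  exact ⟨k, hk, (continuous_subtype_val.tendsto 1).comp hlim⟩

namespace Matrix

variable {ι : Type*} [Fintype ι]

theorem pow_mulVec_eq_pow_smul [DecidableEq ι] {R : Type*} [CommSemiring R] {A : Matrix ι ι R}
    {μ : R} {w : ι → R} (hw : A *ᵥ w = μ • w) (k : ℕ) :
    A ^ k *ᵥ w = μ ^ k • w := by
  induction k with
  | zero => simp
  | succ k ih => rw [pow_succ', ← mulVec_mulVec, ih, mulVec_smul, hw, smul_smul, ← pow_succ]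

theorem mulVec_comp_linearMap {m R A : Type*} [CommSemiring R] [Semiring A] [Algebra R A]
    (M : Matrix m ι R) (L : A →ₗ[R] R) (w : ι → A) :
    M *ᵥ (L ∘ w) = L ∘ (M.map (algebraMap R A) *ᵥ w) := by
  ext i
  simp [mulVec, dotProduct, map_sum, ← Algebra.smul_def]

theorem map_ofReal_mulVec_eq_self {M : Matrix ι ι ℝ} {w : ι → ℂ}
    (hre : M *ᵥ (Complex.reCLM ∘ w) = Complex.reCLM ∘ w)
    (him : M *ᵥ (Complex.imCLM ∘ w) = Complex.imCLM ∘ w) :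
    M.map Complex.ofReal *ᵥ w = w := by
  rw [← Complex.reCLM.coe_coe, mulVec_comp_linearMap] at hre
  rw [← Complex.imCLM.coe_coe, mulVec_comp_linearMap] at him
  ext i : 1
  apply Complex.ext
  · simpa using congrFun hre i
  · simpa using congrFun him i

variable [DecidableEq ι]

theorem tendsto_pow_mulVec_comp_of_map_ofReal_mulVec_eq_smul {M : Matrix ι ι ℝ} {μ : ℂ}
    {w : ι → ℂ} (hw : M.map Complex.ofReal *ᵥ w = μ • w) {k : ℕ → ℕ}
    (hk : Tendsto (fun j => μ ^ k j) atTop (𝓝 1)) (L : ℂ →L[ℝ] ℝ) :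
    Tendsto (fun j => M ^ k j *ᵥ (L ∘ w)) atTop (𝓝 (L ∘ w)) := by
  rw [← Complex.coe_algebraMap] at hw
  have hpow (j : ℕ) : M ^ k j *ᵥ (L ∘ w) = L ∘ (μ ^ k j • w) := by
    rw [← L.coe_coe, mulVec_comp_linearMap, Matrix.map_pow, pow_mulVec_eq_pow_smul hw]
  have hcont : Continuous fun c : ℂ => L ∘ (c • w) := by fun_prop
  have hlim := (hcont.tendsto 1).comp hk
  rw [one_smul] at hlim
  exact (tendsto_congr hpow).2 hlim

theorem mulVec_eq_self_of_tendsto_pow_mulVec {M : Matrix ι ι ℝ} {h : (ι → ℝ) → ℝ}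
    (hc : Continuous h)
    (hmono : ∀ (v : ι → ℝ) (k : ℕ), 0 < k → h ((M ^ k) *ᵥ v) ≥ h (M *ᵥ v) ∧ h (M *ᵥ v) ≥ h v)
    (heq : ∀ v : ι → ℝ, h (M *ᵥ v) = h v → M *ᵥ v = v) {v : ι → ℝ} {k : ℕ → ℕ}
    (hk : ∀ j, 0 < k j) (hlim : Tendsto (fun j => M ^ k j *ᵥ v) atTop (𝓝 v)) :
    M *ᵥ v = v := by
  have hle : h (M *ᵥ v) ≤ h v :=
    ge_of_tendsto ((hc.tendsto v).comp hlim) (.of_forall fun j => (hmono v (k j) (hk j)).1)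
  exact heq v (hle.antisymm (hmono v 1 one_pos).2)

end Matrix

theorem stmt5 {n : ℕ} (M : Matrix (Fin n) (Fin n) ℝ) (h : (Fin n → ℝ) → ℝ)
    (hc : Continuous h)
    (hmono : ∀ (v : Fin n → ℝ) (k : ℕ), 0 < k →
      h ((M ^ k) *ᵥ v) ≥ h (M *ᵥ v) ∧ h (M *ᵥ v) ≥ h v)
    (heq : ∀ v : Fin n → ℝ, h (M *ᵥ v) = h v → M *ᵥ v = v) :
    ¬ ∃ μ : ℂ, ‖μ‖ = 1 ∧ μ ≠ 1 ∧
      ∃ w : Fin n → ℂ, w ≠ 0 ∧ (M.map Complex.ofReal) *ᵥ w = μ • w := by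
  rintro ⟨μ, hμ, hμ1, w, hw, hMw⟩
  obtain ⟨k, hk0, hk⟩ := Complex.exists_tendsto_pow_one_of_norm_eq_one hμ
  have hfix (L : ℂ →L[ℝ] ℝ) : M *ᵥ (L ∘ w) = L ∘ w :=
    mulVec_eq_self_of_tendsto_pow_mulVec hc hmono heq hk0
      (tendsto_pow_mulVec_comp_of_map_ofReal_mulVec_eq_smul hMw hk L)
  have hμw : μ • w = (1 : ℂ) • w := by
    rw [one_smul, ← hMw, map_ofReal_mulVec_eq_self (hfix _) (hfix _)]
  exact hμ1 (smul_left_injective ℂ hw hμw)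
end

section
/- Let M be a real n×n matrix with an eigenvalue μ ∈ ℂ with |μ| = 1 and μ ≠ 1. Then there exists a nonzero vector v ∈ ℝⁿ and a strictly increasing sequence of positive integers p_1 < p_2 < … such that Mv ≠ v and M^{p_i} v → v as i → ∞. -/
open Matrix Filter Topology

/-! The powers of `μ` lie in the compact group `Circle`, so a subsequence `μ ^ ψ i` converges and
the quotients `μ ^ (ψ (2i+1) - ψ i)` tend to `1`; these gaps go to infinity, which yields the
exponents `p i`. For a complex eigenvector `w` and any real-linear `φ : ℂ → ℝ`, `M ^ k` sends
`φ ∘ w` to `φ ∘ (μ ^ k • w)`, which tends to `φ ∘ w` along `p`. Since `μ ≠ 1`, `M` cannot fix both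
the real and the imaginary part of `w`. -/

theorem exists_strictMono_tendsto_pow_one {G : Type*} [Group G] [TopologicalSpace G]
    [IsTopologicalGroup G] [SeqCompactSpace G] (g : G) :
    ∃ p : ℕ → ℕ, StrictMono p ∧ (∀ i, 0 < p i) ∧ Tendsto (fun i => g ^ p i) atTop (𝓝 1) := by
  obtain ⟨a, ψ, hψ, hlim⟩ := SeqCompactSpace.tendsto_subseq fun k => g ^ k
  set gap : ℕ → ℕ := fun i => ψ (i + 1 + i) - ψ i
  have hgap : ∀ i, i < gap i := fun i => by
    have := hψ.add_le_nat (i + 1) i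
    simp only [gap]
    omega
  have hgap_lim : Tendsto (fun i => g ^ gap i) atTop (𝓝 1) := by
    have hfar : Tendsto (fun i => i + 1 + i) atTop atTop :=
      tendsto_atTop_mono (fun i => Nat.le_add_left i (i + 1)) tendsto_id
    have := (hlim.comp hfar).mul hlim.inv
    rw [mul_inv_cancel] at this
    refine this.congr fun i => ?_
    simp only [gap, Function.comp_apply, ← pow_sub g (hψ.monotone (by omega : i ≤ i + 1 + i))]
  obtain ⟨φ, hφ, hmono⟩ := strictMono_subseq_of_tendsto_atTop
    (tendsto_atTop_mono (fun i => (hgap i).le) tendsto_id)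
  exact ⟨gap ∘ φ, hmono, fun i => (Nat.zero_le _).trans_lt (hgap (φ i)),
    hgap_lim.comp hφ.tendsto_atTop⟩

section RealPart

variable {ι : Type*} [Fintype ι]

theorem Matrix.mulVec_comp_linearMap_s7 {R A F m : Type*} [CommSemiring R] [Semiring A] [Algebra R A]
    [FunLike F A R] [LinearMapClass F R A R] (φ : F) (B : Matrix m ι R) (w : ι → A) :
    B *ᵥ (φ ∘ w) = φ ∘ (B.map (algebraMap R A) *ᵥ w) := by
  ext i
  simp [mulVec, dotProduct, map_sum, ← Algebra.smul_def]

theorem Matrix.pow_mulVec_of_mulVec_eq_smul {R : Type*} [CommSemiring R] [DecidableEq ι]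
    {A : Matrix ι ι R} {μ : R} {w : ι → R} (h : A *ᵥ w = μ • w) (k : ℕ) :
    A ^ k *ᵥ w = μ ^ k • w := by
  induction k with
  | zero => simp
  | succ k ih => rw [pow_succ', ← mulVec_mulVec, ih, mulVec_smul, h, smul_smul, pow_succ]

theorem Matrix.exists_clm_mulVec_comp_ne {M : Matrix ι ι ℝ} {w : ι → ℂ}
    (h : M.map Complex.ofReal *ᵥ w ≠ w) : ∃ φ : ℂ →L[ℝ] ℝ, M *ᵥ (φ ∘ w) ≠ φ ∘ w := by
  by_contra! hfix
  refine h (funext fun i => Complex.ext ?_ ?_)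
  · simpa [mulVec_comp_linearMap_s7, Complex.coe_algebraMap] using congrFun (hfix Complex.reCLM) i
  · simpa [mulVec_comp_linearMap_s7, Complex.coe_algebraMap] using congrFun (hfix Complex.imCLM) i

theorem Matrix.tendsto_pow_mulVec_comp_clm [DecidableEq ι] {M : Matrix ι ι ℝ} {μ : ℂ}
    {w : ι → ℂ} (hMw : M.map Complex.ofReal *ᵥ w = μ • w) {p : ℕ → ℕ}
    (hp : Tendsto (fun i => μ ^ p i) atTop (𝓝 1)) (φ : ℂ →L[ℝ] ℝ) :
    Tendsto (fun i => M ^ p i *ᵥ (φ ∘ w)) atTop (𝓝 (φ ∘ w)) := by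
  have hpow : ∀ k, M ^ k *ᵥ (φ ∘ w) = φ ∘ (μ ^ k • w) := fun k => by
    rw [mulVec_comp_linearMap_s7, Matrix.map_pow, Complex.coe_algebraMap,
      pow_mulVec_of_mulVec_eq_smul hMw]
  simp only [hpow]
  have hcont : Continuous fun c : ℂ => φ ∘ (c • w) := by fun_prop
  have := (hcont.tendsto 1).comp hp
  rwa [one_smul] at this

end RealPart

theorem stmt7 {n : ℕ} (M : Matrix (Fin n) (Fin n) ℝ) (μ : ℂ)
    (habs : ‖μ‖ = 1) (hne : μ ≠ 1)
    (heig : ∃ w : Fin n → ℂ, w ≠ 0 ∧ (M.map Complex.ofReal) *ᵥ w = μ • w) :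
    ∃ (v : Fin n → ℝ) (p : ℕ → ℕ), v ≠ 0 ∧ StrictMono p ∧ (∀ i, 0 < p i) ∧
      M *ᵥ v ≠ v ∧ Tendsto (fun i => (M ^ p i) *ᵥ v) atTop (nhds v) := by
  obtain ⟨w, hw, hMw⟩ := heig
  obtain ⟨p, hp, hpos, hlim⟩ :=
    exists_strictMono_tendsto_pow_one (G := Circle) ⟨μ, mem_sphere_zero_iff_norm.2 habs⟩
  have hμp : Tendsto (fun i => μ ^ p i) atTop (𝓝 1) := (continuous_subtype_val.tendsto 1).comp hlim
  have hMw_ne : M.map Complex.ofReal *ᵥ w ≠ w := by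
    rw [hMw]
    exact fun h => hne (smul_left_injective ℂ hw (h.trans (one_smul ℂ w).symm))
  obtain ⟨φ, hφ⟩ := exists_clm_mulVec_comp_ne hMw_ne
  exact ⟨φ ∘ w, p, fun h => hφ (by simp [h]), hp, hpos, hφ,
    tendsto_pow_mulVec_comp_clm hMw hμp φ⟩
end

section
/- The polynomial x⁴ − x³ − x² − x + 1 has a real root λ > 1 and a complex root on the unit circle; i.e., its largest real root has a Galois conjugate of absolute value 1. -/
/-!
The polynomial is palindromic: with `t = x + 1/x` it becomes `x² (t² - t - 3)`, so it factors as
`(x² - a x + 1) (x² - b x + 1)` with `a, b = (1 ± √13) / 2`. Since `a > 2`, the first factor has a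
real root `> 1`; since `|b| ≤ 2`, the second has a pair of conjugate roots on the unit circle.
-/

theorem quartic_eq_mul_quadratics {R : Type*} [CommRing R] {a b : R} (hab : a + b = 1)
    (hab' : a * b = -3) (x : R) :
    x ^ 4 - x ^ 3 - x ^ 2 - x + 1 = (x ^ 2 - a * x + 1) * (x ^ 2 - b * x + 1) := by
  linear_combination (x ^ 3 + x) * hab - x ^ 2 * hab'

theorem exists_one_lt_sq_sub_mul_add_one_eq_zero {c : ℝ} (hc : 2 < c) :
    ∃ x : ℝ, 1 < x ∧ x ^ 2 - c * x + 1 = 0 := by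
  have hs : Real.sqrt (c ^ 2 - 4) ^ 2 = c ^ 2 - 4 := Real.sq_sqrt (by nlinarith)
  refine ⟨(c + Real.sqrt (c ^ 2 - 4)) / 2, ?_, by linear_combination hs / 4⟩
  linarith [Real.sqrt_nonneg (c ^ 2 - 4)]

open Complex in
theorem exists_norm_eq_one_sq_sub_mul_add_one_eq_zero {c : ℝ} (hc : |c| ≤ 2) :
    ∃ μ : ℂ, ‖μ‖ = 1 ∧ μ ^ 2 - c * μ + 1 = 0 := by
  set t := Real.sqrt (1 - (c / 2) ^ 2)
  have ht : t ^ 2 = 1 - (c / 2) ^ 2 := Real.sq_sqrt (by nlinarith [sq_abs c, abs_nonneg c])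
  refine ⟨⟨c / 2, t⟩, ?_, ?_⟩
  · rw [norm_def, normSq_mk, ← sq, ← sq, ht]
    norm_num
  · apply Complex.ext
    · simp only [sub_re, add_re, sq, mul_re, ofReal_re, ofReal_im, one_re, zero_re]
      linear_combination -ht
    · simp only [sub_im, add_im, sq, mul_im, ofReal_re, ofReal_im, one_im, zero_im]
      ring

theorem stmt13 :
    (∃ lam : ℝ, 1 < lam ∧ lam ^ 4 - lam ^ 3 - lam ^ 2 - lam + 1 = 0) ∧
    (∃ μ : ℂ, ‖μ‖ = 1 ∧ μ ^ 4 - μ ^ 3 - μ ^ 2 - μ + 1 = 0) := by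
  set s := Real.sqrt 13
  have hs : s ^ 2 = 13 := Real.sq_sqrt (by norm_num)
  have hs0 : 0 ≤ s := Real.sqrt_nonneg 13
  have hsum : (1 + s) / 2 + (1 - s) / 2 = 1 := by ring
  have hprod : (1 + s) / 2 * ((1 - s) / 2) = -3 := by linear_combination -hs / 4
  constructor
  · obtain ⟨lam, hlam, hroot⟩ :=
      exists_one_lt_sq_sub_mul_add_one_eq_zero (c := (1 + s) / 2) (by nlinarith)
    exact ⟨lam, hlam, by rw [quartic_eq_mul_quadratics hsum hprod, hroot, zero_mul]⟩
  · obtain ⟨μ, hμ, hroot⟩ := exists_norm_eq_one_sq_sub_mul_add_one_eq_zero (c := (1 - s) / 2)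
      (abs_le.2 ⟨by nlinarith, by nlinarith⟩)
    have hsumC : (((1 + s) / 2 : ℝ) : ℂ) + ((1 - s) / 2 : ℝ) = 1 := by exact_mod_cast hsum
    have hprodC : (((1 + s) / 2 : ℝ) : ℂ) * ((1 - s) / 2 : ℝ) = -3 := by exact_mod_cast hprod
    exact ⟨μ, hμ, by rw [quartic_eq_mul_quadratics hsumC hprodC, hroot, mul_zero]⟩
end

section
/- Let M ∈ M_n(ℝ) and h : ℝⁿ → ℝ continuous such that h(Mv) ≥ h(v) for all v, with equality only when Mv = v. If v is a vector lying in an M-invariant two-dimensional subspace on which M acts as a rotation by an angle θ that is not a multiple of 2π, then a contradiction arises; hence M has no invariant 2-plane on which it acts by a nontrivial rotation. -/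
open Matrix

theorem stmt17 {n : ℕ} (M : Matrix (Fin n) (Fin n) ℝ) (h : (Fin n → ℝ) → ℝ)
    (hc : Continuous h) (hmono : ∀ v : Fin n → ℝ, h (M *ᵥ v) ≥ h v)
    (heq : ∀ v : Fin n → ℝ, h (M *ᵥ v) = h v → M *ᵥ v = v)
    (θ : ℝ) (hθ : ∀ k : ℤ, θ ≠ 2 * Real.pi * k)
    (e₁ e₂ : Fin n → ℝ) (hind : LinearIndependent ℝ ![e₁, e₂])
    (h1 : M *ᵥ e₁ = Real.cos θ • e₁ + Real.sin θ • e₂)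
    (h2 : M *ᵥ e₂ = -Real.sin θ • e₁ + Real.cos θ • e₂) :
    False := by
  -- the map from a pair of coordinates to the plane
  set g : ℝ × ℝ → (Fin n → ℝ) := fun p => p.1 • e₁ + p.2 • e₂ with hg
  have hgc : Continuous g := by
    exact (continuous_fst.smul continuous_const).add (continuous_snd.smul continuous_const)
  -- M acts on coordinates as rotation
  have hrot : ∀ p : ℝ × ℝ, M *ᵥ g p =
      g (p.1 * Real.cos θ - p.2 * Real.sin θ, p.1 * Real.sin θ + p.2 * Real.cos θ) := by
    intro p
    simp only [hg, mulVec_add, mulVec_smul, h1, h2]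
    module
  -- the orbit in coordinates
  set p : ℕ → ℝ × ℝ := fun k => (Real.cos (k * θ), Real.sin (k * θ)) with hp
  set x : ℕ → (Fin n → ℝ) := fun k => g (p k) with hxdef
  have hstep : ∀ k : ℕ, M *ᵥ x k = x (k + 1) := by
    intro k
    rw [hxdef]
    simp only
    have harg : ((p k).1 * Real.cos θ - (p k).2 * Real.sin θ,
        (p k).1 * Real.sin θ + (p k).2 * Real.cos θ) = p (k + 1) := by
      simp only [hp, Prod.mk.injEq]
      push_cast
      rw [show ((k : ℝ) + 1) * θ = k * θ + θ by ring, Real.cos_add, Real.sin_add]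
      constructor <;> ring
    rw [hrot (p k), harg]
  -- compactness: extract a convergent subsequence of p
  have hmem : ∀ k, p k ∈ Set.Icc ((-1 : ℝ), (-1 : ℝ)) (1, 1) := by
    intro k
    constructor
    · exact ⟨Real.neg_one_le_cos _, Real.neg_one_le_sin _⟩
    · exact ⟨Real.cos_le_one _, Real.sin_le_one _⟩
  obtain ⟨a, -, φ, hφ, hlim⟩ := isCompact_Icc.tendsto_subseq hmem
  -- limit point has norm 1
  have hsq : a.1 ^ 2 + a.2 ^ 2 = 1 := by
    have h1' : Filter.Tendsto (fun j => (p (φ j)).1 ^ 2 + (p (φ j)).2 ^ 2)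
        Filter.atTop (nhds (a.1 ^ 2 + a.2 ^ 2)) := by
      exact (((continuous_fst.pow 2).add (continuous_snd.pow 2)).tendsto a).comp hlim
    have h2' : (fun j => (p (φ j)).1 ^ 2 + (p (φ j)).2 ^ 2) = fun _ => (1 : ℝ) := by
      funext j
      simp only [hp]
      rw [← Real.sin_sq_add_cos_sq ((φ j : ℝ) * θ)]
      ring
    rw [h2'] at h1'
    exact tendsto_nhds_unique h1' tendsto_const_nhds
  set w : Fin n → ℝ := g a with hw
  have hxw : Filter.Tendsto (fun j => x (φ j)) Filter.atTop (nhds w) :=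
    (hgc.tendsto a).comp hlim
  -- the sequence h (x k) is monotone
  have hmonoseq : Monotone fun k => h (x k) := by
    apply monotone_nat_of_le_succ
    intro k
    rw [← hstep k]
    exact hmono (x k)
  -- subsequence tends to h w
  have hsub : Filter.Tendsto (fun j => h (x (φ j))) Filter.atTop (nhds (h w)) :=
    (hc.tendsto w).comp hxw
  -- whole sequence converges to h w
  have hconv : Filter.Tendsto (fun k => h (x k)) Filter.atTop (nhds (h w)) := by
    rcases tendsto_of_monotone hmonoseq with ht | ⟨L, hL⟩
    · exact absurd (ht.comp hφ.tendsto_atTop) (hsub.not_tendsto (disjoint_nhds_atTop _))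
    · have : Filter.Tendsto (fun j => h (x (φ j))) Filter.atTop (nhds L) :=
        hL.comp hφ.tendsto_atTop
      rwa [tendsto_nhds_unique this hsub] at hL
  -- also h (M *ᵥ w) = h w via the shifted subsequence
  have hshift : Filter.Tendsto (fun j => φ j + 1) Filter.atTop Filter.atTop :=
    Filter.tendsto_atTop_mono (fun j => Nat.le_succ _) hφ.tendsto_atTop
  have hMw : h (M *ᵥ w) = h w := by
    have hMc : Continuous fun v : Fin n → ℝ => M *ᵥ v :=
      LinearMap.continuous_of_finiteDimensional M.mulVecLin
    have t1 : Filter.Tendsto (fun j => h (M *ᵥ x (φ j))) Filter.atTop (nhds (h (M *ᵥ w))) :=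
      ((hc.comp hMc).tendsto w).comp hxw
    have t2 : Filter.Tendsto (fun j => h (x (φ j + 1))) Filter.atTop (nhds (h w)) :=
      hconv.comp hshift
    have e : (fun j => h (M *ᵥ x (φ j))) = fun j => h (x (φ j + 1)) := by
      funext j; rw [hstep]
    rw [e] at t1
    exact tendsto_nhds_unique t1 t2
  have hfix : M *ᵥ w = w := heq w hMw
  -- read off coordinates of the fixed point equation
  rw [hw, hrot a] at hfix
  have hpair := LinearIndependent.pair_iff.mp hind
  have hzero : (a.1 * Real.cos θ - a.2 * Real.sin θ - a.1) • e₁ +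
      (a.1 * Real.sin θ + a.2 * Real.cos θ - a.2) • e₂ = 0 := by
    have h0 := sub_eq_zero_of_eq hfix
    rw [← h0]
    simp only [hg]
    module
  obtain ⟨hc1, hc2⟩ := hpair _ _ hzero
  have hcos : Real.cos θ = 1 := by
    have hc1' : a.1 * Real.cos θ - a.2 * Real.sin θ = a.1 := by linarith
    have hc2' : a.1 * Real.sin θ + a.2 * Real.cos θ = a.2 := by linarith
    linear_combination a.1 * hc1' + a.2 * hc2' - (Real.cos θ - 1) * hsq
  obtain ⟨k, hk⟩ := Real.cos_eq_one_iff θ |>.mp hcos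
  exact hθ k (by linarith [hk])
end
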